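/- Define the Jacobian matrix J(x, y) = [[−3 + (32/π)x, −4/π], [(48/π)y, −4 + (48/π)x]] of the p = 3 one-loop flow at vanishing disorder. Then: (i) the characteristic polynomial of J(3π/16, 0) is (X − 3)(X − 5); (ii) the characteristic polynomial of J(0, 0) is (X + 3)(X + 4); (iii) the characteristic polynomial of J(π/12, −5π²/144) is X² + X/3 − 20/3, whose roots are (−1 + √241)/6 and (−1 − √241)/6. -/
import Mathlib


open Real Polynomial

/-- Jacobian (stability matrix) of the `p = 3` one-loop flow at vanishing disorder,
at the point `(x, y)`. -/
noncomputable def Jp3 (x y : ℝ) : Matrix (Fin 2) (Fin 2) ℝ :=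
  !![-3 + (32 / π) * x, -4 / π; (48 / π) * y, -4 + (48 / π) * x]

lemma charpoly_two (M : Matrix (Fin 2) (Fin 2) ℝ) :
    M.charpoly = (X - C (M 0 0)) * (X - C (M 1 1)) - C (M 0 1 * M 1 0) := by
  rw [Matrix.charpoly, Matrix.det_fin_two, Matrix.charmatrix_apply_eq,
    Matrix.charmatrix_apply_eq, Matrix.charmatrix_apply_ne _ _ _ (by decide),
    Matrix.charmatrix_apply_ne _ _ _ (by decide), map_mul]
  ring

lemma sqrt241_sq : Real.sqrt 241 * Real.sqrt 241 = 241 :=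
  Real.mul_self_sqrt (by norm_num)

/-- Characteristic polynomials of the stability matrix at the three fixed points of
the `p = 3` one-loop flow at vanishing disorder; at `(π/12, −5π²/144)` the
characteristic polynomial is `X² + X/3 − 20/3`, with roots `(−1 ± √241)/6`. -/
theorem p3_critical_exponents :
    (Jp3 (3 * π / 16) 0).charpoly = (X - C 3) * (X - C 5) ∧
    (Jp3 0 0).charpoly = (X + C 3) * (X + C 4) ∧
    (Jp3 (π / 12) (-5 * π ^ 2 / 144)).charpoly = X ^ 2 + C (1 / 3) * X - C (20 / 3) ∧
    (X ^ 2 + C (1 / 3) * X - C (20 / 3) : ℝ[X]).eval ((-1 + Real.sqrt 241) / 6) = 0 ∧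
    (X ^ 2 + C (1 / 3) * X - C (20 / 3) : ℝ[X]).eval ((-1 - Real.sqrt 241) / 6) = 0 := by
  have hπ : (π : ℝ) ≠ 0 := Real.pi_ne_zero
  refine ⟨?_, ?_, ?_, ?_, ?_⟩
  · have e00 : Jp3 (3 * π / 16) 0 0 0 = 3 := by simp [Jp3]; field_simp; ring
    have e11 : Jp3 (3 * π / 16) 0 1 1 = 5 := by simp [Jp3]; field_simp; ring
    have e01 : Jp3 (3 * π / 16) 0 0 1 * Jp3 (3 * π / 16) 0 1 0 = 0 := by simp [Jp3]
    rw [charpoly_two, e00, e11, e01]; simp [sub_zero]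
  · have e00 : Jp3 0 0 0 0 = -3 := by simp [Jp3]
    have e11 : Jp3 0 0 1 1 = -4 := by simp [Jp3]
    have e01 : Jp3 0 0 0 1 * Jp3 0 0 1 0 = 0 := by simp [Jp3]
    rw [charpoly_two, e00, e11, e01]; simp
  · have e00 : Jp3 (π / 12) (-5 * π ^ 2 / 144) 0 0 = -1/3 := by
      simp [Jp3]; field_simp; ring
    have e11 : Jp3 (π / 12) (-5 * π ^ 2 / 144) 1 1 = 0 := by
      simp [Jp3]; field_simp; norm_num
    have e01 : Jp3 (π / 12) (-5 * π ^ 2 / 144) 0 1 *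
        Jp3 (π / 12) (-5 * π ^ 2 / 144) 1 0 = 20/3 := by
      simp [Jp3]; field_simp; ring
    rw [charpoly_two, e00, e11, e01, map_zero, sub_zero,
      show ((-1:ℝ)/3) = -(1/3) by norm_num, map_neg]
    ring
  · simp only [eval_sub, eval_add, eval_mul, eval_pow, eval_C, eval_X]
    have := sqrt241_sq; nlinarith [this]
  · simp only [eval_sub, eval_add, eval_mul, eval_pow, eval_C, eval_X]
    have := sqrt241_sq; nlinarith [this]
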